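/- arXiv:2505.17600 — 5 statements merged into one kernel-verified Lean document; each statement's English description precedes it below -/
import Mathlib

section
/- Let p > 2 be a real number and let ℓ_p denote the real Banach space of sequences x = (x_n) with Σ|x_n|^p < ∞, equipped with the norm ‖x‖_p = (Σ|x_n|^p)^(1/p). Then for all κ, τ > 0, T₁(κ,τ,ℓ_p) = 2^(−1/p) · ((κ+τ)^p + |κ−τ|^p)^(1/p). -/
/-- The constant `T₁(κ,τ,X) = sup{ (‖κx + τy‖ ‖κx − τy‖)^{1/2} : x, y ∈ S(X) }`. -/
noncomputable def T1 (X : Type*) [NormedAddCommGroup X] (κ τ : ℝ) [Module ℝ X] : ℝ :=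
  sSup {r : ℝ | ∃ x y : X, ‖x‖ = 1 ∧ ‖y‖ = 1 ∧
    r = Real.sqrt (‖κ • x + τ • y‖ * ‖κ • x - τ • y‖)}

/-!
By Hanner's inequality for `p ≥ 2`, unit vectors `x, y` of `ℓ_p` satisfy
`‖κx + τy‖^p + ‖κx - τy‖^p ≤ (κ + τ)^p + |κ - τ|^p`; since the geometric mean of the two norms
is at most their `p`-power mean, `T₁ ≤ (((κ + τ)^p + |κ - τ|^p) / 2)^(1/p)`. Equality is attained
by `x = 2^(-1/p) (e₀ + e₁)`, `y = 2^(-1/p) (e₀ - e₁)`, for which both norms equal this value.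

Hanner's inequality is summed from the pointwise bound
`|a + b|^p + |a - b|^p ≤ α(r) |a|^p + β(r) |b|^p`, valid for every `0 < r ≤ 1`, evaluated at
`r = ‖g‖ / ‖f‖`.
-/

open Real Set
open scoped ENNReal

namespace Real

lemma add_div_two_rpow_le {a b z : ℝ} (ha : 0 ≤ a) (hb : 0 ≤ b) (hz : 1 ≤ z) :
    ((a + b) / 2) ^ z ≤ (a ^ z + b ^ z) / 2 := by
  have h := (convexOn_rpow hz).2 ha hb (by norm_num : (0:ℝ) ≤ 1 / 2)
    (by norm_num : (0:ℝ) ≤ 1 / 2) (by norm_num)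
  simp only [smul_eq_mul] at h
  rw [show (a + b) / 2 = 1 / 2 * a + 1 / 2 * b by ring]
  linarith

lemma sqrt_mul_le_rpow_mean {a b p : ℝ} (ha : 0 ≤ a) (hb : 0 ≤ b) (hp : 1 ≤ p) :
    √(a * b) ≤ ((a ^ p + b ^ p) / 2) ^ p⁻¹ := by
  calc √(a * b) ≤ (a + b) / 2 :=
        sqrt_le_iff.2 ⟨by positivity, by nlinarith [sq_nonneg (a - b)]⟩
    _ = (((a + b) / 2) ^ p) ^ p⁻¹ := (rpow_rpow_inv (by positivity) (by positivity)).symm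
    _ ≤ ((a ^ p + b ^ p) / 2) ^ p⁻¹ := by gcongr; exact add_div_two_rpow_le ha hb hp

lemma rpow_eq_sq_rpow_div_two {x : ℝ} (hx : 0 ≤ x) (p : ℝ) : x ^ p = (x ^ 2) ^ (p / 2) := by
  rw [← rpow_natCast, ← rpow_mul hx]; norm_num; ring_nf

lemma add_rpow_add_abs_sub_rpow_le {a b p : ℝ} (ha : 0 ≤ a) (hb : 0 ≤ b) (hp : 2 ≤ p) :
    (a + b) ^ p + |a - b| ^ p ≤ 2 ^ (p - 1) * (a ^ p + b ^ p) := by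
  have hp2 : 1 ≤ p / 2 := by linarith
  calc (a + b) ^ p + |a - b| ^ p = ((a + b) ^ 2) ^ (p / 2) + ((a - b) ^ 2) ^ (p / 2) := by
        rw [rpow_eq_sq_rpow_div_two (by positivity), rpow_eq_sq_rpow_div_two (abs_nonneg _),
          sq_abs]
    _ ≤ ((a + b) ^ 2 + (a - b) ^ 2) ^ (p / 2) :=
        add_rpow_le_rpow_add (by positivity) (by positivity) hp2
    _ = 2 ^ p * ((a ^ 2 + b ^ 2) / 2) ^ (p / 2) := by
        rw [rpow_eq_sq_rpow_div_two zero_le_two, ← mul_rpow (by norm_num) (by positivity)]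
        ring_nf
    _ ≤ 2 ^ p * (((a ^ 2) ^ (p / 2) + (b ^ 2) ^ (p / 2)) / 2) := by
        gcongr; exact add_div_two_rpow_le (by positivity) (by positivity) hp2
    _ = 2 ^ (p - 1) * (a ^ p + b ^ p) := by
        rw [← rpow_eq_sq_rpow_div_two ha, ← rpow_eq_sq_rpow_div_two hb, rpow_sub two_pos,
          rpow_one]
        ring

lemma abs_add_rpow_add_abs_sub_rpow_eq (a b z : ℝ) :
    |a + b| ^ z + |a - b| ^ z = (|a| + |b|) ^ z + |(|a| - |b|)| ^ z := by
  rw [← abs_of_nonneg (add_nonneg (abs_nonneg a) (abs_nonneg b))]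
  rcases abs_choice a with ha | ha <;> rcases abs_choice b with hb | hb <;> rw [ha, hb]
  · rw [← sub_eq_add_neg, sub_neg_eq_add, add_comm]
  · rw [neg_add_eq_sub, abs_sub_comm, ← neg_add', abs_neg, add_comm]
  · rw [← neg_add, abs_neg, sub_neg_eq_add, neg_add_eq_sub, abs_sub_comm]

end Real

/-- The weights `α(r)`, `β(r)` of Hanner's proof. -/
noncomputable def hannerAlpha (p r : ℝ) : ℝ := (1 + r) ^ (p - 1) + (1 - r) ^ (p - 1)

noncomputable def hannerBeta (p r : ℝ) : ℝ :=
  ((1 + r) ^ (p - 1) - (1 - r) ^ (p - 1)) / r ^ (p - 1)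

section HannerWeights

variable {p r : ℝ}

lemma hannerAlpha_add_hannerBeta_mul_rpow (hp : p ≠ 0) (hr0 : 0 < r) (hr1 : r ≤ 1) :
    hannerAlpha p r + hannerBeta p r * r ^ p = (1 + r) ^ p + (1 - r) ^ p := by
  have hsucc : ∀ x : ℝ, 0 ≤ x → x ^ p = x ^ (p - 1) * x := fun x hx => by
    rw [← rpow_add_one' hx (by simpa using hp), sub_add_cancel]
  rw [hannerAlpha, hannerBeta, hsucc r hr0.le, hsucc (1 + r) (by linarith),
    hsucc (1 - r) (by linarith)]
  field_simp
  ring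

lemma two_le_hannerAlpha (hp : 2 ≤ p) (hr0 : 0 ≤ r) (hr1 : r ≤ 1) : 2 ≤ hannerAlpha p r := by
  have h := add_div_two_rpow_le (a := 1 + r) (b := 1 - r) (by linarith) (by linarith)
    (show 1 ≤ p - 1 by linarith)
  rw [show (1 + r + (1 - r)) / 2 = 1 by ring, one_rpow] at h
  rw [hannerAlpha]
  linarith

lemma two_le_hannerBeta (hp : 2 ≤ p) (hr0 : 0 < r) (hr1 : r ≤ 1) : 2 ≤ hannerBeta p r := by
  have hp1 : 1 ≤ p - 1 := by linarith
  have hsup := add_rpow_le_rpow_add (a := 1 - r) (b := 2 * r) (by linarith) (by linarith) hp1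
  have h2 : (2:ℝ) ≤ 2 ^ (p - 1) := by
    simpa using rpow_le_rpow_of_exponent_le one_le_two hp1
  rw [show 1 - r + 2 * r = 1 + r by ring, mul_rpow zero_le_two hr0.le] at hsup
  rw [hannerBeta, le_div_iff₀ (by positivity)]
  nlinarith [rpow_pos_of_pos hr0 (p - 1)]

lemma hannerAlpha_one (hp : p ≠ 1) : hannerAlpha p 1 = 2 ^ (p - 1) := by
  simp [hannerAlpha, one_add_one_eq_two, zero_rpow (sub_ne_zero.2 hp)]

lemma hannerBeta_one (hp : p ≠ 1) : hannerBeta p 1 = 2 ^ (p - 1) := by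
  simp [hannerBeta, one_add_one_eq_two, zero_rpow (sub_ne_zero.2 hp)]

lemma hasDerivAt_hannerAlpha_add_hannerBeta_mul (c : ℝ) (hr0 : 0 < r) (hr1 : r < 1) :
    HasDerivAt (fun r => hannerAlpha p r + hannerBeta p r * c)
      ((p - 1) * ((1 + r) ^ (p - 2) - (1 - r) ^ (p - 2)) * (1 - c / r ^ p)) r := by
  have hpred : ∀ x : ℝ, 0 < x → x ^ (p - 1) = x ^ (p - 2) * x := fun x hx => by
    rw [← rpow_add_one hx.ne']; ring_nf
  have hA : HasDerivAt (fun r : ℝ => (1 + r) ^ (p - 1)) ((p - 1) * (1 + r) ^ (p - 2)) r :=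
    (((hasDerivAt_id' r).const_add 1).rpow_const (Or.inl (by linarith))).congr_deriv (by ring_nf)
  have hB : HasDerivAt (fun r : ℝ => (1 - r) ^ (p - 1)) (-((p - 1) * (1 - r) ^ (p - 2))) r :=
    (((hasDerivAt_id' r).const_sub 1).rpow_const (Or.inl (by linarith))).congr_deriv (by ring_nf)
  have hR : HasDerivAt (fun r : ℝ => r ^ (p - 1)) ((p - 1) * r ^ (p - 2)) r :=
    ((hasDerivAt_id' r).rpow_const (Or.inl hr0.ne')).congr_deriv (by ring_nf)
  refine ((hA.add hB).add (((hA.sub hB).div hR (rpow_pos_of_pos hr0 _).ne').mul_const c)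
    ).congr_deriv ?_
  have hr : r ^ p = r ^ (p - 2) * r * r := by rw [← hpred r hr0, ← rpow_add_one hr0.ne']; ring_nf
  simp only [Pi.sub_apply]
  rw [hpred (1 + r) (by linarith), hpred (1 - r) (by linarith), hpred r hr0, hr]
  have := rpow_pos_of_pos hr0 (p - 2)
  field_simp
  ring

lemma continuousOn_hannerAlpha_add_hannerBeta_mul (hp : 1 ≤ p) (c : ℝ) :
    ContinuousOn (fun r => hannerAlpha p r + hannerBeta p r * c) (Ioi 0) := by
  intro r hr
  have hr0 : 0 < r := hr
  apply ContinuousAt.continuousWithinAt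
  unfold hannerAlpha hannerBeta
  fun_prop (disch := first | exact Or.inr (by linarith) | exact (rpow_pos_of_pos hr0 _).ne')

lemma monotoneOn_hannerAlpha_add_hannerBeta_mul (hp : 2 ≤ p) {c u v : ℝ} (hu : 0 < u)
    (hv : v ≤ 1) (hc : c ≤ u ^ p) :
    MonotoneOn (fun r => hannerAlpha p r + hannerBeta p r * c) (Icc u v) := by
  refine monotoneOn_of_hasDerivWithinAt_nonneg (convex_Icc u v)
    (f' := fun s => (p - 1) * ((1 + s) ^ (p - 2) - (1 - s) ^ (p - 2)) * (1 - c / s ^ p))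
    ((continuousOn_hannerAlpha_add_hannerBeta_mul (by linarith) c).mono
      fun s hs => hu.trans_le hs.1) (fun s hs => ?_) (fun s hs => ?_) <;>
  rw [interior_Icc] at hs
  · exact (hasDerivAt_hannerAlpha_add_hannerBeta_mul c (hu.trans hs.1) (hs.2.trans_le hv)
      ).hasDerivWithinAt
  · have hs0 : 0 < s := hu.trans hs.1
    refine mul_nonneg (mul_nonneg (by linarith) (sub_nonneg.2 ?_)) (sub_nonneg.2 ?_)
    · exact rpow_le_rpow (by linarith [hs.2]) (by linarith) (by linarith)
    · rw [div_le_one (rpow_pos_of_pos hs0 p)]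
      exact hc.trans (rpow_le_rpow hu.le hs.1.le (by linarith))

lemma antitoneOn_hannerAlpha_add_hannerBeta_mul (hp : 2 ≤ p) {c u v : ℝ} (hu : 0 < u)
    (hv : v ≤ 1) (hc : v ^ p ≤ c) :
    AntitoneOn (fun r => hannerAlpha p r + hannerBeta p r * c) (Icc u v) := by
  refine antitoneOn_of_hasDerivWithinAt_nonpos (convex_Icc u v)
    (f' := fun s => (p - 1) * ((1 + s) ^ (p - 2) - (1 - s) ^ (p - 2)) * (1 - c / s ^ p))
    ((continuousOn_hannerAlpha_add_hannerBeta_mul (by linarith) c).mono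
      fun s hs => hu.trans_le hs.1) (fun s hs => ?_) (fun s hs => ?_) <;>
  rw [interior_Icc] at hs
  · exact (hasDerivAt_hannerAlpha_add_hannerBeta_mul c (hu.trans hs.1) (hs.2.trans_le hv)
      ).hasDerivWithinAt
  · have hs0 : 0 < s := hu.trans hs.1
    refine mul_nonpos_of_nonneg_of_nonpos (mul_nonneg (by linarith) (sub_nonneg.2 ?_))
      (sub_nonpos.2 ?_)
    · exact rpow_le_rpow (by linarith [hs.2]) (by linarith) (by linarith)
    · rw [one_le_div (rpow_pos_of_pos hs0 p)]
      exact (rpow_le_rpow hs0.le hs.2.le (by linarith)).trans hc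

lemma one_add_rpow_add_abs_one_sub_rpow_le (hp : 2 ≤ p) {b : ℝ} (hb : 0 ≤ b) (hr0 : 0 < r)
    (hr1 : r ≤ 1) : (1 + b) ^ p + |1 - b| ^ p ≤ hannerAlpha p r + hannerBeta p r * b ^ p := by
  -- As a function of `r`, the right side decreases while `r ≤ b` and increases afterwards, and
  -- it equals the left side at `r = b`; for `b ≥ 1` its value at `r = 1` is Clarkson's bound.
  rcases hb.eq_or_lt with rfl | hb0
  · rw [zero_rpow (by positivity), mul_zero, add_zero, sub_zero, abs_one, one_rpow]
    linarith [two_le_hannerAlpha hp hr0.le hr1]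
  rcases le_total b 1 with hb1 | hb1
  · rw [abs_of_nonneg (sub_nonneg.2 hb1),
      ← hannerAlpha_add_hannerBeta_mul_rpow (by positivity) hb0 hb1]
    rcases le_total r b with hrb | hbr
    · exact antitoneOn_hannerAlpha_add_hannerBeta_mul hp hr0 hb1 le_rfl
        (left_mem_Icc.2 hrb) (right_mem_Icc.2 hrb) hrb
    · exact monotoneOn_hannerAlpha_add_hannerBeta_mul hp hb0 hr1 le_rfl
        (left_mem_Icc.2 hbr) (right_mem_Icc.2 hbr) hbr
  · calc (1 + b) ^ p + |1 - b| ^ p ≤ 2 ^ (p - 1) * (b ^ p + 1 ^ p) := by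
          rw [add_comm 1 b, abs_sub_comm]
          exact add_rpow_add_abs_sub_rpow_le (by linarith) zero_le_one hp
      _ = hannerAlpha p 1 + hannerBeta p 1 * b ^ p := by
          rw [hannerAlpha_one (by linarith), hannerBeta_one (by linarith), one_rpow]
          ring
      _ ≤ hannerAlpha p r + hannerBeta p r * b ^ p :=
          antitoneOn_hannerAlpha_add_hannerBeta_mul hp hr0 le_rfl
            (by rw [one_rpow]; exact one_le_rpow hb1 (by linarith))
            (left_mem_Icc.2 hr1) (right_mem_Icc.2 hr1) hr1

lemma abs_add_rpow_add_abs_sub_rpow_le (hp : 2 ≤ p) (hr0 : 0 < r) (hr1 : r ≤ 1) (a b : ℝ) :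
    |a + b| ^ p + |a - b| ^ p ≤ hannerAlpha p r * |a| ^ p + hannerBeta p r * |b| ^ p := by
  rw [abs_add_rpow_add_abs_sub_rpow_eq]
  rcases (abs_nonneg a).eq_or_lt with ha | ha
  · rw [← ha, zero_rpow (by positivity), mul_zero, zero_add, zero_sub, abs_neg, abs_abs]
    nlinarith [two_le_hannerBeta hp hr0 hr1, rpow_nonneg (abs_nonneg b) p]
  obtain ⟨t, ht, hb⟩ : ∃ t, 0 ≤ t ∧ |b| = |a| * t :=
    ⟨|b| / |a|, by positivity, by field_simp⟩
  have hA := rpow_nonneg ha.le p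
  calc (|a| + |b|) ^ p + |(|a| - |b|)| ^ p = |a| ^ p * ((1 + t) ^ p + |1 - t| ^ p) := by
        rw [hb, ← mul_one_add, ← mul_one_sub, abs_mul, abs_abs, mul_rpow ha.le (by positivity),
          mul_rpow (abs_nonneg _) (abs_nonneg _)]
        ring
    _ ≤ |a| ^ p * (hannerAlpha p r + hannerBeta p r * t ^ p) :=
        mul_le_mul_of_nonneg_left (one_add_rpow_add_abs_one_sub_rpow_le hp ht hr0 hr1) hA
    _ = hannerAlpha p r * |a| ^ p + hannerBeta p r * |b| ^ p := by
        rw [hb, mul_rpow ha.le ht]; ring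

end HannerWeights

namespace lp

variable {ι : Type*} {p : ℝ≥0∞}

lemma norm_add_rpow_add_norm_sub_rpow_le_of_forall {E : ι → Type*}
    [∀ i, NormedAddCommGroup (E i)] (hp : 0 < p.toReal) {α β : ℝ}
    (h : ∀ i (a b : E i), ‖a + b‖ ^ p.toReal + ‖a - b‖ ^ p.toReal ≤
      α * ‖a‖ ^ p.toReal + β * ‖b‖ ^ p.toReal) (f g : lp E p) :
    ‖f + g‖ ^ p.toReal + ‖f - g‖ ^ p.toReal ≤ α * ‖f‖ ^ p.toReal + β * ‖g‖ ^ p.toReal := by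
  have hs (f : lp E p) : Summable fun i => ‖f i‖ ^ p.toReal := (lp.memℓp f).summable hp
  simp only [lp.norm_rpow_eq_tsum hp, ← tsum_mul_left]
  rw [← (hs _).tsum_add (hs _), ← ((hs f).mul_left α).tsum_add ((hs g).mul_left β)]
  exact ((hs _).add (hs _)).tsum_le_tsum (fun i => h i (f i) (g i))
    (((hs f).mul_left α).add ((hs g).mul_left β))

/-- Hanner's inequality for `p ≥ 2`. -/
theorem norm_add_rpow_add_norm_sub_rpow_le [Fact (1 ≤ p)] (hp : 2 ≤ p.toReal)
    (f g : lp (fun _ : ι => ℝ) p) :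
    ‖f + g‖ ^ p.toReal + ‖f - g‖ ^ p.toReal ≤
      (‖f‖ + ‖g‖) ^ p.toReal + |‖f‖ - ‖g‖| ^ p.toReal := by
  wlog hgf : ‖g‖ ≤ ‖f‖ generalizing f g
  · have h := this g f (le_of_not_ge hgf)
    rwa [add_comm g, norm_sub_rev, add_comm ‖g‖, abs_sub_comm] at h
  set q := p.toReal
  rcases (norm_nonneg g).eq_or_lt with hg | hg
  · rw [norm_eq_zero.1 hg.symm]
    simp
  obtain ⟨r, hr0, hr1, hgr⟩ : ∃ r, 0 < r ∧ r ≤ 1 ∧ ‖g‖ = ‖f‖ * r :=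
    have hf : 0 < ‖f‖ := hg.trans_le hgf
    ⟨‖g‖ / ‖f‖, by positivity, (div_le_one hf).2 hgf, by field_simp⟩
  have hf := norm_nonneg f
  calc ‖f + g‖ ^ q + ‖f - g‖ ^ q ≤ hannerAlpha q r * ‖f‖ ^ q + hannerBeta q r * ‖g‖ ^ q :=
        norm_add_rpow_add_norm_sub_rpow_le_of_forall (by linarith)
          (fun _ a b => abs_add_rpow_add_abs_sub_rpow_le hp hr0 hr1 a b) f g
    _ = ‖f‖ ^ q * (hannerAlpha q r + hannerBeta q r * r ^ q) := by
        rw [hgr, mul_rpow hf hr0.le]; ring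
    _ = (‖f‖ + ‖g‖) ^ q + |‖f‖ - ‖g‖| ^ q := by
        rw [hannerAlpha_add_hannerBeta_mul_rpow (by positivity) hr0 hr1, hgr, ← mul_one_add,
          ← mul_one_sub, abs_of_nonneg (by nlinarith), mul_rpow hf (by linarith),
          mul_rpow hf (by linarith)]
        ring

lemma norm_rpow_single_add_single [DecidableEq ι] {E : Type*} [NormedAddCommGroup E]
    (hp : 0 < p.toReal) {i j : ι} (hij : i ≠ j) (a b : E) :
    ‖(lp.single p i a + lp.single p j b : lp (fun _ : ι => E) p)‖ ^ p.toReal =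
      ‖a‖ ^ p.toReal + ‖b‖ ^ p.toReal := by
  have h := lp.norm_sum_single (E := fun _ : ι => E) hp (fun k => if k = i then a else b) {i, j}
  rwa [Finset.sum_pair hij, Finset.sum_pair hij, if_pos rfl, if_neg hij.symm] at h

lemma exists_norm_eq_one_norm_rpow_smul_add_smul_eq [Fact (1 ≤ p)] [Nontrivial ι]
    (hp : 0 < p.toReal) (κ τ : ℝ) :
    ∃ x y : lp (fun _ : ι => ℝ) p, ‖x‖ = 1 ∧ ‖y‖ = 1 ∧
      ‖κ • x + τ • y‖ ^ p.toReal = (|κ + τ| ^ p.toReal + |κ - τ| ^ p.toReal) / 2 ∧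
      ‖κ • x - τ • y‖ ^ p.toReal = (|κ + τ| ^ p.toReal + |κ - τ| ^ p.toReal) / 2 := by
  classical
  obtain ⟨i, j, hij⟩ := exists_pair_ne ι
  set q := p.toReal
  set c : ℝ := 2 ^ (-q⁻¹)
  have hc : |c| ^ q = 1 / 2 := by
    rw [abs_of_pos (by positivity), ← rpow_mul zero_le_two, neg_mul, inv_mul_cancel₀ hp.ne',
      rpow_neg_one, one_div]
  have hnorm (a b : ℝ) :
      ‖(a • lp.single p i c + b • lp.single p j c : lp (fun _ : ι => ℝ) p)‖ ^ q =
        (|a| ^ q + |b| ^ q) / 2 := by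
    rw [← lp.single_smul, ← lp.single_smul, lp.norm_rpow_single_add_single hp hij, smul_eq_mul,
      smul_eq_mul, Real.norm_eq_abs, Real.norm_eq_abs, abs_mul, abs_mul,
      mul_rpow (abs_nonneg _) (abs_nonneg _), mul_rpow (abs_nonneg _) (abs_nonneg _), hc]
    ring
  have norm_eq_one {x : lp (fun _ : ι => ℝ) p} (h : ‖x‖ ^ q = 1) : ‖x‖ = 1 := by
    rw [← rpow_rpow_inv (norm_nonneg x) hp.ne', h, one_rpow]
  refine ⟨lp.single p i c + lp.single p j c, lp.single p i c - lp.single p j c,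
    norm_eq_one ?_, norm_eq_one ?_, ?_, ?_⟩
  · simpa [one_smul] using hnorm 1 1
  · simpa [one_smul, neg_smul, ← sub_eq_add_neg] using hnorm 1 (-1)
  · rw [← hnorm]; congr 2; module
  · rw [add_comm (|κ + τ| ^ q), ← hnorm]; congr 2; module

end lp

theorem T1_lp_eq {ι : Type*} [Nontrivial ι] {p : ℝ≥0∞} [Fact (1 ≤ p)] (hp : 2 ≤ p.toReal)
    (κ τ : ℝ) :
    T1 (lp (fun _ : ι => ℝ) p) κ τ =
      ((|κ + τ| ^ p.toReal + |κ - τ| ^ p.toReal) / 2) ^ p.toReal⁻¹ := by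
  set q := p.toReal
  have hq : 0 < q := by linarith
  refine IsGreatest.csSup_eq ⟨?_, ?_⟩
  · obtain ⟨x, y, hx, hy, hadd, hsub⟩ :=
      lp.exists_norm_eq_one_norm_rpow_smul_add_smul_eq (ι := ι) hq κ τ
    have hsub_add : ‖κ • x - τ • y‖ = ‖κ • x + τ • y‖ := by
      rw [← rpow_rpow_inv (norm_nonneg (κ • x - τ • y)) hq.ne', hsub, ← hadd,
        rpow_rpow_inv (norm_nonneg _) hq.ne']
    refine ⟨x, y, hx, hy, ?_⟩
    rw [hsub_add, sqrt_mul_self (norm_nonneg _), ← hadd, rpow_rpow_inv (norm_nonneg _) hq.ne']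
  · rintro _ ⟨x, y, hx, hy, rfl⟩
    have hanner := lp.norm_add_rpow_add_norm_sub_rpow_le hp (κ • x) (τ • y)
    rw [norm_smul, norm_smul, hx, hy, mul_one, mul_one, Real.norm_eq_abs, Real.norm_eq_abs,
      ← abs_add_rpow_add_abs_sub_rpow_eq] at hanner
    calc √(‖κ • x + τ • y‖ * ‖κ • x - τ • y‖)
        ≤ ((‖κ • x + τ • y‖ ^ q + ‖κ • x - τ • y‖ ^ q) / 2) ^ q⁻¹ :=
          sqrt_mul_le_rpow_mean (norm_nonneg _) (norm_nonneg _) (by linarith)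
      _ ≤ ((|κ + τ| ^ q + |κ - τ| ^ q) / 2) ^ q⁻¹ := by gcongr

/-- For real `p > 2` and the sequence space `ℓ_p`, for all `κ, τ > 0`,
`T₁(κ,τ,ℓ_p) = 2^(−1/p) ((κ+τ)^p + |κ−τ|^p)^(1/p)`. -/
theorem stmt4 (p : ℝ) (hp : 2 < p) [Fact (1 ≤ ENNReal.ofReal p)]
    (κ τ : ℝ) (hκ : 0 < κ) (hτ : 0 < τ) :
    T1 (lp (fun _ : ℕ => ℝ) (ENNReal.ofReal p)) κ τ =
      (2 : ℝ) ^ (-(1 / p)) * ((κ + τ) ^ p + |κ - τ| ^ p) ^ (1 / p) := by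
  have hq : (ENNReal.ofReal p).toReal = p := ENNReal.toReal_ofReal (by linarith)
  rw [T1_lp_eq (by rw [hq]; exact hp.le), hq, abs_of_pos (add_pos hκ hτ),
    div_rpow (by positivity) zero_le_two, rpow_neg zero_le_two, one_div, div_eq_inv_mul]
end

section
/- Let X be a real Banach space with dim X ≥ 2 and let κ, τ > 0. Then T₂(κ,τ,X)² ≤ 2κ² · C′_NJ(X) + 2√2 · κ · |κ − τ| · √(C′_NJ(X)) + (κ − τ)². -/
/-- The skew constant `T₂(κ,τ,X) = sup{ (‖κx + τy‖ ‖τx − κy‖)^{1/2} : x, y ∈ S(X) }`. -/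
noncomputable def T2 (X : Type*) [NormedAddCommGroup X] [NormedSpace ℝ X] (κ τ : ℝ) : ℝ :=
  sSup {r : ℝ | ∃ x y : X, ‖x‖ = 1 ∧ ‖y‖ = 1 ∧
    r = Real.sqrt (‖κ • x + τ • y‖ * ‖τ • x - κ • y‖)}

/-- The modified von Neumann–Jordan constant
`C′_NJ(X) = sup{ (‖x+y‖² + ‖x−y‖²)/4 : x, y ∈ S(X) }`. -/
noncomputable def CNJprime (X : Type*) [NormedAddCommGroup X] : ℝ :=
  sSup {r : ℝ | ∃ x y : X, ‖x‖ = 1 ∧ ‖y‖ = 1 ∧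
    r = (‖x + y‖ ^ 2 + ‖x - y‖ ^ 2) / 4}

/-- For a real Banach space `X` with `dim X ≥ 2` and `κ, τ > 0`,
`T₂(κ,τ,X)² ≤ 2κ² C′_NJ(X) + 2√2 κ |κ−τ| √(C′_NJ(X)) + (κ−τ)²`. -/
theorem stmt12 {X : Type*} [NormedAddCommGroup X] [NormedSpace ℝ X] [CompleteSpace X]
    (hdim : 2 ≤ Module.rank ℝ X) (κ τ : ℝ) (hκ : 0 < κ) (hτ : 0 < τ) :
    T2 X κ τ ^ 2 ≤ 2 * κ ^ 2 * CNJprime X +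
      2 * Real.sqrt 2 * κ * |κ - τ| * Real.sqrt (CNJprime X) + (κ - τ) ^ 2 := by
  have hnt : Nontrivial X := by
    rw [← rank_pos_iff_nontrivial (R := ℝ)]
    exact lt_of_lt_of_le (by norm_num) hdim
  obtain ⟨v, hv⟩ := exists_ne (0 : X)
  set u : X := ‖v‖⁻¹ • v with hu
  have hun : ‖u‖ = 1 := norm_smul_inv_norm hv
  -- bounds for CNJprime
  have hbddC : BddAbove {r : ℝ | ∃ x y : X, ‖x‖ = 1 ∧ ‖y‖ = 1 ∧
      r = (‖x + y‖ ^ 2 + ‖x - y‖ ^ 2) / 4} := by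
    refine ⟨2, ?_⟩
    rintro r ⟨x, y, hx, hy, rfl⟩
    have h1 : ‖x + y‖ ≤ 2 := by
      have := norm_add_le x y; rw [hx, hy] at this; linarith
    have h2 : ‖x - y‖ ≤ 2 := by
      have := norm_sub_le x y; rw [hx, hy] at this; linarith
    nlinarith [norm_nonneg (x + y), norm_nonneg (x - y)]
  have hCle : ∀ x y : X, ‖x‖ = 1 → ‖y‖ = 1 →
      (‖x + y‖ ^ 2 + ‖x - y‖ ^ 2) / 4 ≤ CNJprime X := fun x y hx hy =>
    le_csSup hbddC ⟨x, y, hx, hy, rfl⟩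
  have hC1 : 1 ≤ CNJprime X := by
    have h := hCle u u hun hun
    have h2 : ‖u + u‖ = 2 := by
      rw [← two_smul ℝ u, norm_smul, hun]; simp
    rw [h2, sub_self, norm_zero] at h
    norm_num at h
    exact h
  have hC0 : 0 ≤ CNJprime X := by linarith
  set C := CNJprime X with hCdef
  set s := Real.sqrt C with hsdef
  have hs0 : 0 ≤ s := Real.sqrt_nonneg C
  have hs2 : s ^ 2 = C := Real.sq_sqrt hC0
  set d := |κ - τ| with hddef
  have hd0 : 0 ≤ d := abs_nonneg _
  set R : ℝ := 2 * κ ^ 2 * C + 2 * Real.sqrt 2 * κ * d * s + d ^ 2 with hRdef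
  have hR0 : 0 ≤ R := by
    have : 0 ≤ Real.sqrt 2 := Real.sqrt_nonneg 2
    have h1 : 0 ≤ 2 * κ ^ 2 * C := by positivity
    have h2 : 0 ≤ 2 * Real.sqrt 2 * κ * d * s := by positivity
    nlinarith [sq_nonneg d]
  -- key pointwise bound
  have hkey : ∀ x y : X, ‖x‖ = 1 → ‖y‖ = 1 →
      ‖κ • x + τ • y‖ * ‖τ • x - κ • y‖ ≤ R := by
    intro x y hx hy
    set a := ‖x + y‖ with ha
    set b := ‖x - y‖ with hb
    have ha0 : 0 ≤ a := norm_nonneg _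
    have hb0 : 0 ≤ b := norm_nonneg _
    have hC4 : (a ^ 2 + b ^ 2) / 4 ≤ C := hCle x y hx hy
    have h1 : ‖κ • x + τ • y‖ ≤ κ * a + d := by
      have he : κ • x + τ • y = κ • (x + y) + (τ - κ) • y := by module
      rw [he]
      calc ‖κ • (x + y) + (τ - κ) • y‖ ≤ ‖κ • (x + y)‖ + ‖(τ - κ) • y‖ := norm_add_le _ _
        _ = κ * a + d := by
            rw [norm_smul, norm_smul, hy, Real.norm_eq_abs, Real.norm_eq_abs,
              abs_of_pos hκ, abs_sub_comm τ κ, ← ha, ← hddef]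
            ring
    have h2 : ‖τ • x - κ • y‖ ≤ κ * b + d := by
      have he : τ • x - κ • y = κ • (x - y) + (τ - κ) • x := by module
      rw [he]
      calc ‖κ • (x - y) + (τ - κ) • x‖ ≤ ‖κ • (x - y)‖ + ‖(τ - κ) • x‖ := norm_add_le _ _
        _ = κ * b + d := by
            rw [norm_smul, norm_smul, hx, Real.norm_eq_abs, Real.norm_eq_abs,
              abs_of_pos hκ, abs_sub_comm τ κ, ← hb, ← hddef]
            ring
    have hab : a * b ≤ 2 * C := by nlinarith [sq_nonneg (a - b)]
    have hsum : a + b ≤ 2 * Real.sqrt 2 * s := by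
      have h8 : (a + b) ^ 2 ≤ 8 * C := by nlinarith [sq_nonneg (a - b)]
      have := Real.sqrt_le_sqrt h8
      rw [Real.sqrt_sq (by positivity)] at this
      have hsplit : Real.sqrt (8 * C) = Real.sqrt 8 * s := Real.sqrt_mul (by norm_num) C
      have h8' : Real.sqrt 8 = 2 * Real.sqrt 2 := by
        rw [show (8 : ℝ) = 2 ^ 2 * 2 by norm_num,
          Real.sqrt_mul (by positivity), Real.sqrt_sq (by norm_num : (0:ℝ) ≤ 2)]
      rw [hsplit, h8'] at this
      linarith
    have hprod : ‖κ • x + τ • y‖ * ‖τ • x - κ • y‖ ≤ (κ * a + d) * (κ * b + d) :=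
      mul_le_mul h1 h2 (norm_nonneg _) (by positivity)
    have hexp : (κ * a + d) * (κ * b + d) = κ ^ 2 * (a * b) + κ * d * (a + b) + d ^ 2 := by
      ring
    have e1 : κ ^ 2 * (a * b) ≤ κ ^ 2 * (2 * C) :=
      mul_le_mul_of_nonneg_left hab (sq_nonneg κ)
    have e2 : κ * d * (a + b) ≤ κ * d * (2 * Real.sqrt 2 * s) :=
      mul_le_mul_of_nonneg_left hsum (mul_nonneg hκ.le hd0)
    calc ‖κ • x + τ • y‖ * ‖τ • x - κ • y‖ ≤ (κ * a + d) * (κ * b + d) := hprod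
      _ = κ ^ 2 * (a * b) + κ * d * (a + b) + d ^ 2 := hexp
      _ ≤ κ ^ 2 * (2 * C) + κ * d * (2 * Real.sqrt 2 * s) + d ^ 2 := by linarith
      _ = R := by rw [hRdef]; ring
  -- the T2 set
  set S := {r : ℝ | ∃ x y : X, ‖x‖ = 1 ∧ ‖y‖ = 1 ∧
      r = Real.sqrt (‖κ • x + τ • y‖ * ‖τ • x - κ • y‖)} with hS
  have hne : S.Nonempty := ⟨_, u, u, hun, hun, rfl⟩
  have hub : ∀ r ∈ S, r ≤ Real.sqrt R := by
    rintro r ⟨x, y, hx, hy, rfl⟩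
    exact Real.sqrt_le_sqrt (hkey x y hx hy)
  have hT2le : T2 X κ τ ≤ Real.sqrt R := csSup_le hne hub
  have hT20 : 0 ≤ T2 X κ τ := by
    obtain ⟨r, hr⟩ := hne
    have hr0 : 0 ≤ r := by
      obtain ⟨x, y, hx, hy, rfl⟩ := hr
      exact Real.sqrt_nonneg _
    exact le_trans hr0 (le_csSup ⟨Real.sqrt R, hub⟩ hr)
  have : T2 X κ τ ^ 2 ≤ Real.sqrt R ^ 2 := by
    apply pow_le_pow_left₀ hT20 hT2le
  rw [Real.sq_sqrt hR0] at this
  have hd2 : d ^ 2 = (κ - τ) ^ 2 := by rw [hddef]; exact sq_abs _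
  rw [hRdef, hd2] at this
  exact this
end

section
/- Let X be a real Banach space with dim X ≥ 2 and let κ, τ > 0. Then (max(κ,τ) · T(X))² − 4·max(κ,τ)·|κ−τ| + (κ−τ)² ≤ T₂(κ,τ,X)² ≤ (min(κ,τ) · T(X))² + 4·min(κ,τ)·|κ−τ| + (κ−τ)². -/
/-- The constant `T(X) = sup{ (‖x + y‖ ‖x − y‖)^{1/2} : x, y ∈ S(X) }`. -/
noncomputable def Tconst (X : Type*) [NormedAddCommGroup X] : ℝ :=
  sSup {r : ℝ | ∃ x y : X, ‖x‖ = 1 ∧ ‖y‖ = 1 ∧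
    r = Real.sqrt (‖x + y‖ * ‖x - y‖)}

lemma T2_swap {X : Type*} [NormedAddCommGroup X] [NormedSpace ℝ X] (κ τ : ℝ) :
    T2 X κ τ = T2 X τ κ := by
  unfold T2
  congr 1
  ext r
  constructor <;> rintro ⟨x, y, hx, hy, rfl⟩ <;>
    exact ⟨y, x, hy, hx, by rw [add_comm, norm_sub_rev]⟩

set_option maxHeartbeats 800000 in
lemma stmt13_aux {X : Type*} [NormedAddCommGroup X] [NormedSpace ℝ X]
    (hX : ∃ e : X, ‖e‖ = 1) {κ τ : ℝ} (hκ : 0 < κ) (hτ : 0 < τ) (hτκ : τ ≤ κ) :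
    (κ * Tconst X) ^ 2 - 4 * κ * (κ - τ) + (κ - τ) ^ 2 ≤ T2 X κ τ ^ 2 ∧
    T2 X κ τ ^ 2 ≤ (τ * Tconst X) ^ 2 + 4 * τ * (κ - τ) + (κ - τ) ^ 2 := by
  obtain ⟨e, he⟩ := hX
  set d : ℝ := κ - τ with hd_def
  have hd : 0 ≤ d := sub_nonneg.mpr hτκ
  have hdκ : d < κ := by simp [hd_def]; linarith
  set S1 := {r : ℝ | ∃ x y : X, ‖x‖ = 1 ∧ ‖y‖ = 1 ∧
    r = Real.sqrt (‖x + y‖ * ‖x - y‖)} with hS1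
  set S2 := {r : ℝ | ∃ x y : X, ‖x‖ = 1 ∧ ‖y‖ = 1 ∧
    r = Real.sqrt (‖κ • x + τ • y‖ * ‖τ • x - κ • y‖)} with hS2
  have hS1ne : S1.Nonempty := ⟨_, e, e, he, he, rfl⟩
  have hS2ne : S2.Nonempty := ⟨_, e, e, he, he, rfl⟩
  have hS1bdd : BddAbove S1 := by
    refine ⟨2, ?_⟩
    rintro r ⟨x, y, hx, hy, rfl⟩
    have h1 : ‖x + y‖ ≤ 2 := by
      calc ‖x + y‖ ≤ ‖x‖ + ‖y‖ := norm_add_le _ _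
        _ = 2 := by rw [hx, hy]; norm_num
    have h2 : ‖x - y‖ ≤ 2 := by
      calc ‖x - y‖ ≤ ‖x‖ + ‖y‖ := norm_sub_le _ _
        _ = 2 := by rw [hx, hy]; norm_num
    calc Real.sqrt (‖x + y‖ * ‖x - y‖) ≤ Real.sqrt 4 := by
          apply Real.sqrt_le_sqrt
          nlinarith [norm_nonneg (x + y), norm_nonneg (x - y)]
      _ = 2 := by rw [show (4:ℝ) = 2^2 by norm_num, Real.sqrt_sq]; norm_num
  have hS2bdd : BddAbove S2 := by
    refine ⟨κ + τ, ?_⟩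
    rintro r ⟨x, y, hx, hy, rfl⟩
    have h1 : ‖κ • x + τ • y‖ ≤ κ + τ := by
      calc ‖κ • x + τ • y‖ ≤ ‖κ • x‖ + ‖τ • y‖ := norm_add_le _ _
        _ = κ + τ := by
            rw [norm_smul, norm_smul, hx, hy, Real.norm_eq_abs, Real.norm_eq_abs,
              abs_of_pos hκ, abs_of_pos hτ]; ring
    have h2 : ‖τ • x - κ • y‖ ≤ κ + τ := by
      calc ‖τ • x - κ • y‖ ≤ ‖τ • x‖ + ‖κ • y‖ := norm_sub_le _ _
        _ = κ + τ := by
            rw [norm_smul, norm_smul, hx, hy, Real.norm_eq_abs, Real.norm_eq_abs,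
              abs_of_pos hκ, abs_of_pos hτ]; ring
    calc Real.sqrt (‖κ • x + τ • y‖ * ‖τ • x - κ • y‖) ≤ Real.sqrt ((κ + τ)^2) := by
          apply Real.sqrt_le_sqrt
          nlinarith [norm_nonneg (κ • x + τ • y), norm_nonneg (τ • x - κ • y)]
      _ = κ + τ := Real.sqrt_sq (by positivity)
  have hTconst : Tconst X = sSup S1 := rfl
  have hT2eq : T2 X κ τ = sSup S2 := rfl
  have hT0 : 0 ≤ Tconst X := by
    rw [hTconst]
    exact le_trans (Real.sqrt_nonneg _) (le_csSup hS1bdd ⟨e, e, he, he, rfl⟩)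
  have hT20 : 0 ≤ T2 X κ τ := by
    rw [hT2eq]
    exact le_trans (Real.sqrt_nonneg _) (le_csSup hS2bdd ⟨e, e, he, he, rfl⟩)
  -- pointwise facts
  have key : ∀ x y : X, ‖x‖ = 1 → ‖y‖ = 1 →
      (κ^2 * (‖x + y‖ * ‖x - y‖) - 4*κ*d + d^2 ≤ ‖κ • x + τ • y‖ * ‖τ • x - κ • y‖ ∧
       ‖κ • x + τ • y‖ * ‖τ • x - κ • y‖ ≤ τ^2 * (‖x + y‖ * ‖x - y‖) + 4*τ*d + d^2) := by
    intro x y hx hy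
    set a := ‖x + y‖
    set b := ‖x - y‖
    set P := ‖κ • x + τ • y‖
    set Q := ‖τ • x - κ • y‖
    have ha0 : 0 ≤ a := norm_nonneg _
    have hb0 : 0 ≤ b := norm_nonneg _
    have hP0 : 0 ≤ P := norm_nonneg _
    have hQ0 : 0 ≤ Q := norm_nonneg _
    have ha2 : a ≤ 2 := by
      calc ‖x + y‖ ≤ ‖x‖ + ‖y‖ := norm_add_le _ _
        _ = 2 := by rw [hx, hy]; norm_num
    have hb2 : b ≤ 2 := by
      calc ‖x - y‖ ≤ ‖x‖ + ‖y‖ := norm_sub_le _ _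
        _ = 2 := by rw [hx, hy]; norm_num
    have nsmul : ∀ (c : ℝ) (z : X), 0 ≤ c → ‖c • z‖ = c * ‖z‖ := by
      intro c z hc; rw [norm_smul, Real.norm_eq_abs, abs_of_nonneg hc]
    -- P ≤ τ a + d
    have h1 : P ≤ τ * a + d := by
      have hdec : κ • x + τ • y = τ • (x + y) + d • x := by
        rw [hd_def]; module
      calc P = ‖τ • (x + y) + d • x‖ := congrArg norm hdec
        _ ≤ ‖τ • (x + y)‖ + ‖d • x‖ := norm_add_le _ _
        _ = τ * a + d := by rw [nsmul _ _ hτ.le, nsmul _ _ hd, hx]; ring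
    -- Q ≤ τ b + d
    have h2 : Q ≤ τ * b + d := by
      have hdec : τ • x - κ • y = τ • (x - y) - d • y := by
        rw [hd_def]; module
      calc Q = ‖τ • (x - y) - d • y‖ := congrArg norm hdec
        _ ≤ ‖τ • (x - y)‖ + ‖d • y‖ := norm_sub_le _ _
        _ = τ * b + d := by rw [nsmul _ _ hτ.le, nsmul _ _ hd, hy]; ring
    -- κ a ≤ P + d
    have h3 : κ * a ≤ P + d := by
      have hdec : κ • (x + y) = (κ • x + τ • y) + d • y := by
        rw [hd_def]; module
      calc κ * a = ‖κ • (x + y)‖ := (nsmul _ _ hκ.le).symm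
        _ = ‖(κ • x + τ • y) + d • y‖ := congrArg norm hdec
        _ ≤ P + ‖d • y‖ := norm_add_le _ _
        _ = P + d := by rw [nsmul _ _ hd, hy]; ring
    -- κ b ≤ Q + d
    have h4 : κ * b ≤ Q + d := by
      have hdec : κ • (x - y) = (τ • x - κ • y) + d • x := by
        rw [hd_def]; module
      calc κ * b = ‖κ • (x - y)‖ := (nsmul _ _ hκ.le).symm
        _ = ‖(τ • x - κ • y) + d • x‖ := congrArg norm hdec
        _ ≤ Q + ‖d • x‖ := norm_add_le _ _
        _ = Q + d := by rw [nsmul _ _ hd, hx]; ring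
    constructor
    · -- lower bound κ² a b - 4κd + d² ≤ P Q
      rcases le_or_gt (κ * a) d with hca | hca
      · nlinarith [mul_nonneg hP0 hQ0, mul_le_mul_of_nonneg_right hca hb0,
          mul_nonneg hd hb0, mul_le_mul_of_nonneg_left hb2 (mul_nonneg hd hκ.le)]
      · rcases le_or_gt (κ * b) d with hcb | hcb
        · nlinarith [mul_nonneg hP0 hQ0, mul_le_mul_of_nonneg_right hcb ha0,
            mul_nonneg hd ha0, mul_le_mul_of_nonneg_left ha2 (mul_nonneg hd hκ.le)]
        · have hu : 0 ≤ κ * a - d := by linarith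
          have hv : 0 ≤ κ * b - d := by linarith
          have hPu : κ * a - d ≤ P := by linarith
          have hQv : κ * b - d ≤ Q := by linarith
          nlinarith [mul_le_mul hPu hQv hv hP0, mul_nonneg hd hκ.le,
            mul_nonneg (mul_nonneg hd hκ.le) (by linarith : (0:ℝ) ≤ 4 - a - b)]
    · -- upper bound P Q ≤ τ² a b + 4τd + d²
      nlinarith [mul_le_mul h1 h2 hQ0 (by positivity : (0:ℝ) ≤ τ * a + d),
        mul_nonneg hd hτ.le, mul_nonneg (mul_nonneg hd hτ.le) (by linarith : (0:ℝ) ≤ 4 - a - b)]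
  -- ab ≤ Tconst²
  have hab : ∀ x y : X, ‖x‖ = 1 → ‖y‖ = 1 → ‖x + y‖ * ‖x - y‖ ≤ Tconst X ^ 2 := by
    intro x y hx hy
    have hmem : Real.sqrt (‖x + y‖ * ‖x - y‖) ≤ Tconst X := by
      rw [hTconst]; exact le_csSup hS1bdd ⟨x, y, hx, hy, rfl⟩
    have := Real.sq_sqrt (mul_nonneg (norm_nonneg (x+y)) (norm_nonneg (x-y)))
    nlinarith [Real.sqrt_nonneg (‖x + y‖ * ‖x - y‖)]
  -- PQ ≤ T2²
  have hPQ : ∀ x y : X, ‖x‖ = 1 → ‖y‖ = 1 →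
      ‖κ • x + τ • y‖ * ‖τ • x - κ • y‖ ≤ T2 X κ τ ^ 2 := by
    intro x y hx hy
    have hmem : Real.sqrt (‖κ • x + τ • y‖ * ‖τ • x - κ • y‖) ≤ T2 X κ τ := by
      rw [hT2eq]; exact le_csSup hS2bdd ⟨x, y, hx, hy, rfl⟩
    have := Real.sq_sqrt (mul_nonneg (norm_nonneg (κ • x + τ • y)) (norm_nonneg (τ • x - κ • y)))
    nlinarith [Real.sqrt_nonneg (‖κ • x + τ • y‖ * ‖τ • x - κ • y‖)]
  constructor
  · -- lower bound
    set C := T2 X κ τ ^ 2 + 4*κ*d - d^2 with hC_def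
    have hC0 : 0 ≤ C := by nlinarith
    have hTle : Tconst X ≤ Real.sqrt C / κ := by
      rw [hTconst]
      apply csSup_le hS1ne
      rintro r ⟨x, y, hx, hy, rfl⟩
      have hpt : κ^2 * (‖x + y‖ * ‖x - y‖) ≤ C := by
        have h := (key x y hx hy).1
        have h2 := hPQ x y hx hy
        nlinarith
      rw [le_div_iff₀ hκ]
      calc Real.sqrt (‖x + y‖ * ‖x - y‖) * κ
          = Real.sqrt (κ^2 * (‖x + y‖ * ‖x - y‖)) := by
            rw [Real.sqrt_mul (sq_nonneg κ) (‖x + y‖ * ‖x - y‖), Real.sqrt_sq hκ.le]; ring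
        _ ≤ Real.sqrt C := Real.sqrt_le_sqrt hpt
    have : κ * Tconst X ≤ Real.sqrt C := by
      rw [le_div_iff₀ hκ] at hTle; linarith [hTle]
    nlinarith [Real.sq_sqrt hC0, Real.sqrt_nonneg C, mul_nonneg hκ.le hT0]
  · -- upper bound
    set U := (τ * Tconst X) ^ 2 + 4*τ*d + d^2 with hU_def
    have hU0 : 0 ≤ U := by positivity
    have hT2le : T2 X κ τ ≤ Real.sqrt U := by
      rw [hT2eq]
      apply csSup_le hS2ne
      rintro r ⟨x, y, hx, hy, rfl⟩
      apply Real.sqrt_le_sqrt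
      have h := (key x y hx hy).2
      have h2 := hab x y hx hy
      nlinarith [mul_nonneg (norm_nonneg (x+y)) (norm_nonneg (x-y))]
    nlinarith [Real.sq_sqrt hU0, Real.sqrt_nonneg U]

/-- For a real Banach space `X` with `dim X ≥ 2` and `κ, τ > 0`,
`(max(κ,τ) T(X))² − 4 max(κ,τ) |κ−τ| + (κ−τ)² ≤ T₂(κ,τ,X)²
  ≤ (min(κ,τ) T(X))² + 4 min(κ,τ) |κ−τ| + (κ−τ)²`. -/
theorem stmt13 {X : Type*} [NormedAddCommGroup X] [NormedSpace ℝ X] [CompleteSpace X]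
    (hdim : 2 ≤ Module.rank ℝ X) (κ τ : ℝ) (hκ : 0 < κ) (hτ : 0 < τ) :
    (max κ τ * Tconst X) ^ 2 - 4 * max κ τ * |κ - τ| + (κ - τ) ^ 2 ≤ T2 X κ τ ^ 2 ∧
    T2 X κ τ ^ 2 ≤ (min κ τ * Tconst X) ^ 2 + 4 * min κ τ * |κ - τ| + (κ - τ) ^ 2 := by

  have hnt : Nontrivial X :=
    rank_pos_iff_nontrivial.mp (lt_of_lt_of_le (by norm_num) hdim)
  have hX : ∃ e : X, ‖e‖ = 1 := exists_norm_eq X zero_le_one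
  rcases le_total τ κ with h | h
  · have H := stmt13_aux hX hκ hτ h
    rwa [max_eq_left h, min_eq_right h, abs_of_nonneg (sub_nonneg.mpr h)]
  · have H := stmt13_aux hX hτ hκ h
    rw [max_eq_right h, min_eq_left h, abs_sub_comm, abs_of_nonneg (sub_nonneg.mpr h),
      show (κ - τ)^2 = (τ - κ)^2 by ring, T2_swap]
    exact H
end

section
/- Let X be a real Banach space with dim X ≥ 2 and let κ, τ > 0. Then X fails to be uniformly non-square if and only if T₂(κ,τ,X) = κ + τ. -/
/-- `X` is uniformly non-square: there exists `δ ∈ (0,1)` with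
`min(‖x+y‖/2, ‖x−y‖/2) ≤ 1 − δ` for all `x, y` in the unit sphere. -/
def UniformlyNonSquare (X : Type*) [NormedAddCommGroup X] : Prop :=
  ∃ δ : ℝ, 0 < δ ∧ δ < 1 ∧ ∀ x y : X, ‖x‖ = 1 → ‖y‖ = 1 →
    min (‖x + y‖ / 2) (‖x - y‖ / 2) ≤ 1 - δ

/-!
For unit vectors `x, y` and `a, b ≥ 0`, splitting `a x + b y` as `min(a,b) (x + y)` plus a
multiple of one vector, or as `max(a,b) (x + y)` minus one, gives
`max(a,b) ‖x + y‖ - |a - b| ≤ ‖a x + b y‖ ≤ min(a,b) ‖x + y‖ + |a - b|`.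
Writing `τ x - κ y = τ x + κ (-y)`, both factors of the product defining `T₂` are controlled
by `‖x + y‖` and `‖x - y‖`. If `X` is not uniformly non-square, both can be close to `2`,
so both factors are close to `κ + τ`. If it is, one of `‖x + y‖, ‖x - y‖` is at most `2 - 2δ`,
which pushes one factor, hence `T₂`, a fixed amount below `κ + τ`.
-/

open Filter Topology

section UnitVectors

variable {X : Type*} [NormedAddCommGroup X] [NormedSpace ℝ X] {x y : X} {a b : ℝ}

lemma norm_smul_add_smul_le_add (hx : ‖x‖ = 1) (hy : ‖y‖ = 1) (ha : 0 ≤ a) (hb : 0 ≤ b) :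
    ‖a • x + b • y‖ ≤ a + b :=
  calc ‖a • x + b • y‖ ≤ ‖a • x‖ + ‖b • y‖ := norm_add_le _ _
    _ = a + b := by
      rw [norm_smul, norm_smul, hx, hy, Real.norm_of_nonneg ha, Real.norm_of_nonneg hb,
        mul_one, mul_one]

lemma norm_smul_add_smul_le_min_mul_add (hx : ‖x‖ = 1) (hy : ‖y‖ = 1) (ha : 0 ≤ a)
    (hb : 0 ≤ b) : ‖a • x + b • y‖ ≤ min a b * ‖x + y‖ + |a - b| := by
  wlog hab : a ≤ b generalizing x y a b
  · have := this hy hx hb ha (le_of_not_ge hab)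
    rwa [add_comm (b • y), add_comm y, min_comm, abs_sub_comm] at this
  calc ‖a • x + b • y‖ = ‖a • (x + y) + (b - a) • y‖ := by congr 1; module
    _ ≤ ‖a • (x + y)‖ + ‖(b - a) • y‖ := norm_add_le _ _
    _ = min a b * ‖x + y‖ + |a - b| := by
      rw [norm_smul, norm_smul, hy, Real.norm_of_nonneg ha,
        Real.norm_of_nonneg (sub_nonneg.2 hab), min_eq_left hab, abs_sub_comm,
        abs_of_nonneg (sub_nonneg.2 hab), mul_one]

lemma max_mul_sub_le_norm_smul_add_smul (hx : ‖x‖ = 1) (hy : ‖y‖ = 1) (ha : 0 ≤ a)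
    (hb : 0 ≤ b) : max a b * ‖x + y‖ - |a - b| ≤ ‖a • x + b • y‖ := by
  wlog hab : a ≤ b generalizing x y a b
  · have := this hy hx hb ha (le_of_not_ge hab)
    rwa [add_comm (b • y), add_comm y, max_comm, abs_sub_comm] at this
  calc max a b * ‖x + y‖ - |a - b| = ‖b • (x + y)‖ - ‖(b - a) • x‖ := by
        rw [norm_smul, norm_smul, hx, Real.norm_of_nonneg hb,
          Real.norm_of_nonneg (sub_nonneg.2 hab), max_eq_right hab, abs_sub_comm,
          abs_of_nonneg (sub_nonneg.2 hab), mul_one]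
    _ ≤ ‖b • (x + y) - (b - a) • x‖ := norm_sub_norm_le _ _
    _ = ‖a • x + b • y‖ := by congr 1; module

lemma norm_smul_sub_smul_le_add (hx : ‖x‖ = 1) (hy : ‖y‖ = 1) (ha : 0 ≤ a) (hb : 0 ≤ b) :
    ‖a • x - b • y‖ ≤ a + b := by
  simpa [smul_neg, ← sub_eq_add_neg] using
    norm_smul_add_smul_le_add hx (y := -y) (by rwa [norm_neg]) ha hb

lemma norm_smul_sub_smul_le_min_mul_add (hx : ‖x‖ = 1) (hy : ‖y‖ = 1) (ha : 0 ≤ a)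
    (hb : 0 ≤ b) : ‖a • x - b • y‖ ≤ min a b * ‖x - y‖ + |a - b| := by
  simpa [smul_neg, ← sub_eq_add_neg] using
    norm_smul_add_smul_le_min_mul_add hx (y := -y) (by rwa [norm_neg]) ha hb

lemma max_mul_sub_le_norm_smul_sub_smul (hx : ‖x‖ = 1) (hy : ‖y‖ = 1) (ha : 0 ≤ a)
    (hb : 0 ≤ b) : max a b * ‖x - y‖ - |a - b| ≤ ‖a • x - b • y‖ := by
  simpa [smul_neg, ← sub_eq_add_neg] using
    max_mul_sub_le_norm_smul_add_smul hx (y := -y) (by rwa [norm_neg]) ha hb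

end UnitVectors

section SkewConstant

variable {X : Type*} [NormedAddCommGroup X] [NormedSpace ℝ X] {κ τ : ℝ}

lemma sqrt_skew_le_add (hκ : 0 ≤ κ) (hτ : 0 ≤ τ) {x y : X} (hx : ‖x‖ = 1) (hy : ‖y‖ = 1) :
    √(‖κ • x + τ • y‖ * ‖τ • x - κ • y‖) ≤ κ + τ := by
  rw [Real.sqrt_le_iff, sq]
  refine ⟨add_nonneg hκ hτ, mul_le_mul (norm_smul_add_smul_le_add hx hy hκ hτ) ?_
    (norm_nonneg _) (add_nonneg hκ hτ)⟩
  rw [add_comm κ]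
  exact norm_smul_sub_smul_le_add hx hy hτ hκ

lemma T2_le_of_forall {c : ℝ} (hc : 0 ≤ c)
    (h : ∀ x y : X, ‖x‖ = 1 → ‖y‖ = 1 → √(‖κ • x + τ • y‖ * ‖τ • x - κ • y‖) ≤ c) :
    T2 X κ τ ≤ c :=
  Real.sSup_le (by rintro _ ⟨x, y, hx, hy, rfl⟩; exact h x y hx hy) hc

lemma T2_le_add (hκ : 0 ≤ κ) (hτ : 0 ≤ τ) : T2 X κ τ ≤ κ + τ :=
  T2_le_of_forall (add_nonneg hκ hτ) fun _ _ hx hy => sqrt_skew_le_add hκ hτ hx hy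

lemma sqrt_skew_le_T2 (hκ : 0 ≤ κ) (hτ : 0 ≤ τ) {x y : X} (hx : ‖x‖ = 1) (hy : ‖y‖ = 1) :
    √(‖κ • x + τ • y‖ * ‖τ • x - κ • y‖) ≤ T2 X κ τ :=
  le_csSup ⟨κ + τ, by rintro _ ⟨x, y, hx, hy, rfl⟩; exact sqrt_skew_le_add hκ hτ hx hy⟩
    ⟨x, y, hx, hy, rfl⟩

lemma add_sub_mul_le_T2_of_not_uniformlyNonSquare (hκ : 0 ≤ κ) (hτ : 0 ≤ τ)
    (hX : ¬ UniformlyNonSquare X) {δ : ℝ} (hδ : 0 < δ) (hδ' : δ ≤ 1 / 2) :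
    κ + τ - 2 * max κ τ * δ ≤ T2 X κ τ := by
  simp only [UniformlyNonSquare, not_exists, not_and, not_forall, not_le] at hX
  obtain ⟨x, y, hx, hy, hmin⟩ := hX δ hδ (by linarith)
  obtain ⟨hsum, hdiff⟩ := lt_min_iff.mp hmin
  set c := κ + τ - 2 * max κ τ * δ
  have hM : 0 ≤ max κ τ := le_max_of_le_left hκ
  have hmax : 2 * max κ τ - |κ - τ| = κ + τ := by
    rw [← max_sub_min_eq_abs', ← min_add_max κ τ]; ring
  have hc : 0 ≤ c := by
    linarith [max_le_add_of_nonneg hκ hτ, mul_le_mul_of_nonneg_left hδ' hM]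
  have hfirst : c ≤ ‖κ • x + τ • y‖ := by
    linarith [max_mul_sub_le_norm_smul_add_smul hx hy hκ hτ,
      mul_le_mul_of_nonneg_left (by linarith : 2 - 2 * δ ≤ ‖x + y‖) hM]
  have hsecond : c ≤ ‖τ • x - κ • y‖ := by
    have := max_mul_sub_le_norm_smul_sub_smul hx hy hτ hκ
    rw [max_comm, abs_sub_comm] at this
    linarith [mul_le_mul_of_nonneg_left (by linarith : 2 - 2 * δ ≤ ‖x - y‖) hM]
  calc c ≤ √(‖κ • x + τ • y‖ * ‖τ • x - κ • y‖) := by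
        rw [Real.le_sqrt hc (by positivity), sq]
        exact mul_le_mul hfirst hsecond hc (norm_nonneg _)
    _ ≤ T2 X κ τ := sqrt_skew_le_T2 hκ hτ hx hy

lemma add_le_T2_of_not_uniformlyNonSquare (hκ : 0 ≤ κ) (hτ : 0 ≤ τ)
    (hX : ¬ UniformlyNonSquare X) : κ + τ ≤ T2 X κ τ := by
  have hlim : Tendsto (fun δ => κ + τ - 2 * max κ τ * δ) (𝓝[>] 0) (𝓝 (κ + τ)) :=
    tendsto_nhdsWithin_of_tendsto_nhds <|
      (show Continuous fun δ : ℝ => κ + τ - 2 * max κ τ * δ by fun_prop).tendsto' 0 _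
        (by simp)
  refine le_of_tendsto hlim ?_
  filter_upwards [Ioo_mem_nhdsGT (by norm_num : (0 : ℝ) < 1 / 2)] with δ hδ
  exact add_sub_mul_le_T2_of_not_uniformlyNonSquare hκ hτ hX hδ.1 hδ.2.le

lemma T2_lt_add_of_uniformlyNonSquare (hκ : 0 < κ) (hτ : 0 < τ) (hX : UniformlyNonSquare X) :
    T2 X κ τ < κ + τ := by
  obtain ⟨δ, hδ, -, hX⟩ := hX
  set c := κ + τ - 2 * min κ τ * δ
  have hm : 0 ≤ min κ τ := (lt_min hκ hτ).le
  have hmin : 2 * min κ τ + |κ - τ| = κ + τ := by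
    rw [← max_sub_min_eq_abs', ← min_add_max κ τ]; ring
  have hprod : ∀ x y : X, ‖x‖ = 1 → ‖y‖ = 1 →
      √(‖κ • x + τ • y‖ * ‖τ • x - κ • y‖) ≤ √((κ + τ) * c) := by
    intro x y hx hy
    refine Real.sqrt_le_sqrt ?_
    rcases min_le_iff.mp (hX x y hx hy) with hsum | hdiff
    · have hfirst : ‖κ • x + τ • y‖ ≤ c := by
        linarith [norm_smul_add_smul_le_min_mul_add hx hy hκ.le hτ.le,
          mul_le_mul_of_nonneg_left (by linarith : ‖x + y‖ ≤ 2 - 2 * δ) hm]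
      rw [mul_comm (κ + τ)]
      exact mul_le_mul hfirst (norm_smul_sub_smul_le_add hx hy hτ.le hκ.le |>.trans_eq
        (add_comm τ κ)) (norm_nonneg _) ((norm_nonneg _).trans hfirst)
    · have hsecond : ‖τ • x - κ • y‖ ≤ c := by
        have := norm_smul_sub_smul_le_min_mul_add hx hy hτ.le hκ.le
        rw [min_comm, abs_sub_comm] at this
        linarith [mul_le_mul_of_nonneg_left (by linarith : ‖x - y‖ ≤ 2 - 2 * δ) hm]
      exact mul_le_mul (norm_smul_add_smul_le_add hx hy hκ.le hτ.le) hsecond (norm_nonneg _)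
        (by positivity)
  calc T2 X κ τ ≤ √((κ + τ) * c) := T2_le_of_forall (Real.sqrt_nonneg _) hprod
    _ < κ + τ := by
      rw [Real.sqrt_lt' (by positivity), sq]
      exact mul_lt_mul_of_pos_left (by nlinarith [lt_min hκ hτ]) (by positivity)

end SkewConstant

theorem stmt14_general {X : Type*} [NormedAddCommGroup X] [NormedSpace ℝ X]
    (κ τ : ℝ) (hκ : 0 < κ) (hτ : 0 < τ) :
    ¬ UniformlyNonSquare X ↔ T2 X κ τ = κ + τ :=
  ⟨fun hX => (T2_le_add hκ.le hτ.le).antisymm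
      (add_le_T2_of_not_uniformlyNonSquare hκ.le hτ.le hX),
    fun hT hX => (T2_lt_add_of_uniformlyNonSquare hκ hτ hX).ne hT⟩

/-- For a real Banach space `X` with `dim X ≥ 2` and `κ, τ > 0`,
`X` fails to be uniformly non-square iff `T₂(κ,τ,X) = κ + τ`. -/
theorem stmt14 {X : Type*} [NormedAddCommGroup X] [NormedSpace ℝ X] [CompleteSpace X]
    (hdim : 2 ≤ Module.rank ℝ X) (κ τ : ℝ) (hκ : 0 < κ) (hτ : 0 < τ) :
    ¬ UniformlyNonSquare X ↔ T2 X κ τ = κ + τ :=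
  stmt14_general κ τ hκ hτ
end

section
/- Let X be a real Banach space with dim X ≥ 2 and let κ, τ > 0. Then the following are equivalent: (i) X fails to be uniformly non-square; (ii) J(X) = 2; (iii) T(X) = 2; (iv) T₂(κ,τ,X) = κ + τ. -/
/-- The James constant `J(X) = sup{ min(‖x+y‖, ‖x−y‖) : x, y ∈ S(X) }`. -/
noncomputable def JamesConst (X : Type*) [NormedAddCommGroup X] : ℝ :=
  sSup {r : ℝ | ∃ x y : X, ‖x‖ = 1 ∧ ‖y‖ = 1 ∧ r = min ‖x + y‖ ‖x - y‖}

set_option linter.unusedSectionVars false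

section Helpers

variable {X : Type*} [NormedAddCommGroup X] [NormedSpace ℝ X]

/-- Auxiliary property: there exist almost-square pairs on the unit sphere. -/
def NearSquare (X : Type*) [NormedAddCommGroup X] : Prop :=
  ∀ ε : ℝ, 0 < ε → ∃ x y : X, ‖x‖ = 1 ∧ ‖y‖ = 1 ∧ 2 - ε < ‖x + y‖ ∧ 2 - ε < ‖x - y‖

lemma exists_unit_vec (h : 2 ≤ Module.rank ℝ X) : ∃ x : X, ‖x‖ = 1 := by
  have hnt : Nontrivial X := by
    rw [← rank_pos_iff_nontrivial (R := ℝ)]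
    exact lt_of_lt_of_le (by norm_num) h
  obtain ⟨x, hx⟩ := exists_ne (0 : X)
  refine ⟨‖x‖⁻¹ • x, ?_⟩
  rw [norm_smul, norm_inv, norm_norm, inv_mul_cancel₀ (norm_ne_zero_iff.mpr hx)]

lemma nearSquare_of_not_uns (h : ¬ UniformlyNonSquare X) : NearSquare X := by
  intro ε hε
  rw [UniformlyNonSquare] at h
  push_neg at h
  obtain ⟨x, y, hx, hy, hlt⟩ := h (min (ε/2) (1/2)) (by positivity) (by
    calc min (ε/2) (1/2) ≤ 1/2 := min_le_right _ _
    _ < 1 := by norm_num)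
  have hδ : min (ε/2) (1/2) ≤ ε/2 := min_le_left _ _
  have h1 : 1 - ε/2 < min (‖x + y‖ / 2) (‖x - y‖ / 2) := by
    calc 1 - ε/2 ≤ 1 - min (ε/2) (1/2) := by linarith
    _ < _ := hlt
  refine ⟨x, y, hx, hy, ?_, ?_⟩
  · have := lt_of_lt_of_le h1 (min_le_left _ _); linarith
  · have := lt_of_lt_of_le h1 (min_le_right _ _); linarith

lemma not_uns_of_nearSquare (h : NearSquare X) : ¬ UniformlyNonSquare X := by
  rintro ⟨δ, hδ0, hδ1, hbound⟩
  obtain ⟨x, y, hx, hy, h1, h2⟩ := h (2*δ) (by linarith)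
  have := hbound x y hx hy
  rcases min_le_iff.mp this with hc | hc <;> linarith

lemma norm_add_le_two {x y : X} (hx : ‖x‖ = 1) (hy : ‖y‖ = 1) : ‖x + y‖ ≤ 2 := by
  calc ‖x + y‖ ≤ ‖x‖ + ‖y‖ := norm_add_le x y
  _ = 2 := by rw [hx, hy]; norm_num

lemma norm_sub_le_two {x y : X} (hx : ‖x‖ = 1) (hy : ‖y‖ = 1) : ‖x - y‖ ≤ 2 := by
  calc ‖x - y‖ ≤ ‖x‖ + ‖y‖ := norm_sub_le x y
  _ = 2 := by rw [hx, hy]; norm_num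

lemma nsm (c : ℝ) (z : X) : ‖c • z‖ = |c| * ‖z‖ := by
  rw [norm_smul, Real.norm_eq_abs]

lemma skew_lower {κ τ : ℝ} (hκ : 0 < κ) (hτ : 0 < τ) {x y : X} (hx : ‖x‖ = 1) (hy : ‖y‖ = 1) :
    max κ τ * ‖x + y‖ - |κ - τ| ≤ ‖κ • x + τ • y‖ ∧
    max κ τ * ‖x - y‖ - |κ - τ| ≤ ‖τ • x - κ • y‖ := by
  rcases le_total κ τ with hle | hle
  · have hmax : max κ τ = τ := max_eq_right hle
    have habs : |κ - τ| = τ - κ := by rw [abs_sub_comm]; exact abs_of_nonneg (by linarith)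
    have habs2 : |τ - κ| = τ - κ := abs_of_nonneg (by linarith)
    have haτ : |τ| = τ := abs_of_nonneg hτ.le
    constructor
    · have h1 := norm_sub_norm_le (τ • (x + y)) ((τ - κ) • x)
      have hid : τ • (x + y) - (τ - κ) • x = κ • x + τ • y := by module
      rw [hid, nsm, nsm, hx, haτ, habs2, mul_one] at h1
      rw [hmax, habs]; linarith
    · have h1 := norm_sub_norm_le (τ • (x - y)) ((κ - τ) • y)
      have hid : τ • (x - y) - (κ - τ) • y = τ • x - κ • y := by module
      rw [hid, nsm, nsm, hy, haτ, habs, mul_one] at h1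
      rw [hmax, habs]; linarith
  · have hmax : max κ τ = κ := max_eq_left hle
    have habs : |κ - τ| = κ - τ := abs_of_nonneg (by linarith)
    have haκ : |κ| = κ := abs_of_nonneg hκ.le
    constructor
    · have h1 := norm_sub_norm_le (κ • (x + y)) ((κ - τ) • y)
      have hid : κ • (x + y) - (κ - τ) • y = κ • x + τ • y := by module
      rw [hid, nsm, nsm, hy, haκ, habs, mul_one] at h1
      rw [hmax, habs]; linarith
    · have h1 := norm_sub_norm_le (κ • (x - y)) ((κ - τ) • x)
      have hid : κ • (x - y) - (κ - τ) • x = τ • x - κ • y := by module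
      rw [hid, nsm, nsm, hx, haκ, habs, mul_one] at h1
      rw [hmax, habs]; linarith

lemma skew_upper {κ τ : ℝ} (hκ : 0 < κ) (hτ : 0 < τ) {x y : X} (hx : ‖x‖ = 1) (hy : ‖y‖ = 1) :
    ‖κ • x + τ • y‖ ≤ min κ τ * ‖x + y‖ + |κ - τ| ∧
    ‖τ • x - κ • y‖ ≤ min κ τ * ‖x - y‖ + |κ - τ| := by
  rcases le_total κ τ with hle | hle
  · have hmin : min κ τ = κ := min_eq_left hle
    have habs : |κ - τ| = τ - κ := by rw [abs_sub_comm]; exact abs_of_nonneg (by linarith)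
    have habs2 : |τ - κ| = τ - κ := abs_of_nonneg (by linarith)
    have haκ : |κ| = κ := abs_of_nonneg hκ.le
    constructor
    · have hid : κ • x + τ • y = κ • (x + y) + (τ - κ) • y := by module
      have h1 := norm_add_le (κ • (x + y)) ((τ - κ) • y)
      rw [← hid, nsm, nsm, hy, haκ, habs2, mul_one] at h1
      rw [hmin, habs]; linarith
    · have hid : τ • x - κ • y = κ • (x - y) + (τ - κ) • x := by module
      have h1 := norm_add_le (κ • (x - y)) ((τ - κ) • x)
      rw [← hid, nsm, nsm, hx, haκ, habs2, mul_one] at h1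
      rw [hmin, habs]; linarith
  · have hmin : min κ τ = τ := min_eq_right hle
    have habs : |κ - τ| = κ - τ := abs_of_nonneg (by linarith)
    have haτ : |τ| = τ := abs_of_nonneg hτ.le
    constructor
    · have hid : κ • x + τ • y = τ • (x + y) + (κ - τ) • x := by module
      have h1 := norm_add_le (τ • (x + y)) ((κ - τ) • x)
      rw [← hid, nsm, nsm, hx, haτ, habs, mul_one] at h1
      rw [hmin, habs]; linarith
    · have hid : τ • x - κ • y = τ • (x - y) - (κ - τ) • y := by module
      have h1 := norm_sub_le (τ • (x - y)) ((κ - τ) • y)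
      rw [← hid, nsm, nsm, hy, haτ, habs, mul_one] at h1
      rw [hmin, habs]; linarith


lemma sqrt_mul_le {a b c : ℝ} (hc : 0 ≤ c) (ha : 0 ≤ a) (hb : 0 ≤ b) (hac : a ≤ c) (hbc : b ≤ c) :
    Real.sqrt (a * b) ≤ c := by
  calc Real.sqrt (a * b) ≤ Real.sqrt (c * c) := Real.sqrt_le_sqrt (by nlinarith)
  _ = c := Real.sqrt_mul_self hc

lemma le_sqrt_mul {a b c : ℝ} (hc : 0 ≤ c) (hac : c ≤ a) (hbc : c ≤ b) :
    c ≤ Real.sqrt (a * b) := by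
  calc c = Real.sqrt (c * c) := (Real.sqrt_mul_self hc).symm
  _ ≤ Real.sqrt (a * b) := Real.sqrt_le_sqrt (by nlinarith)

-- James constant
lemma james_eq_two_of_nearSquare (hu : ∃ x : X, ‖x‖ = 1) (h : NearSquare X) :
    JamesConst X = 2 := by
  set S := {r : ℝ | ∃ x y : X, ‖x‖ = 1 ∧ ‖y‖ = 1 ∧ r = min ‖x + y‖ ‖x - y‖} with hS
  obtain ⟨u, hu1⟩ := hu
  have hne : S.Nonempty := ⟨min ‖u + u‖ ‖u - u‖, u, u, hu1, hu1, rfl⟩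
  have hbdd : BddAbove S := by
    refine ⟨2, ?_⟩
    rintro r ⟨x, y, hx, hy, rfl⟩
    exact le_trans (min_le_left _ _) (norm_add_le_two hx hy)
  apply le_antisymm
  · apply csSup_le hne
    rintro r ⟨x, y, hx, hy, rfl⟩
    exact le_trans (min_le_left _ _) (norm_add_le_two hx hy)
  · by_contra hlt
    push_neg at hlt
    obtain ⟨x, y, hx, hy, h1, h2⟩ := h (2 - JamesConst X) (by linarith)
    have hmem : min ‖x + y‖ ‖x - y‖ ∈ S := ⟨x, y, hx, hy, rfl⟩
    have hle := le_csSup hbdd hmem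
    have : JamesConst X < min ‖x + y‖ ‖x - y‖ := lt_min (by linarith) (by linarith)
    exact absurd hle (not_le.mpr this)

lemma nearSquare_of_james (hu : ∃ x : X, ‖x‖ = 1) (h : JamesConst X = 2) : NearSquare X := by
  intro ε hε
  set S := {r : ℝ | ∃ x y : X, ‖x‖ = 1 ∧ ‖y‖ = 1 ∧ r = min ‖x + y‖ ‖x - y‖} with hS
  obtain ⟨u, hu1⟩ := hu
  have hne : S.Nonempty := ⟨min ‖u + u‖ ‖u - u‖, u, u, hu1, hu1, rfl⟩
  have hlt : 2 - ε < sSup S := by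
    have : JamesConst X = sSup S := rfl
    rw [this] at h; rw [h]; linarith
  obtain ⟨r, ⟨x, y, hx, hy, rfl⟩, hr⟩ := exists_lt_of_lt_csSup hne hlt
  exact ⟨x, y, hx, hy, lt_of_lt_of_le hr (min_le_left _ _),
    lt_of_lt_of_le hr (min_le_right _ _)⟩

-- T constant
lemma tconst_eq_two_of_nearSquare (hu : ∃ x : X, ‖x‖ = 1) (h : NearSquare X) :
    Tconst X = 2 := by
  set S := {r : ℝ | ∃ x y : X, ‖x‖ = 1 ∧ ‖y‖ = 1 ∧ r = Real.sqrt (‖x + y‖ * ‖x - y‖)} with hS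
  obtain ⟨u, hu1⟩ := hu
  have hne : S.Nonempty := ⟨_, u, u, hu1, hu1, rfl⟩
  have hbdd : BddAbove S := by
    refine ⟨2, ?_⟩
    rintro r ⟨x, y, hx, hy, rfl⟩
    exact sqrt_mul_le (by norm_num) (norm_nonneg _) (norm_nonneg _)
      (norm_add_le_two hx hy) (norm_sub_le_two hx hy)
  apply le_antisymm
  · apply csSup_le hne
    rintro r ⟨x, y, hx, hy, rfl⟩
    exact sqrt_mul_le (by norm_num) (norm_nonneg _) (norm_nonneg _)
      (norm_add_le_two hx hy) (norm_sub_le_two hx hy)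
  · by_contra hlt
    push_neg at hlt
    have hT0 : 0 ≤ Tconst X := by
      have hmem : Real.sqrt (‖u + u‖ * ‖u - u‖) ∈ S := ⟨u, u, hu1, hu1, rfl⟩
      exact le_trans (Real.sqrt_nonneg _) (le_csSup hbdd hmem)
    obtain ⟨x, y, hx, hy, h1, h2⟩ := h (2 - Tconst X) (by linarith)
    have hmem : Real.sqrt (‖x + y‖ * ‖x - y‖) ∈ S := ⟨x, y, hx, hy, rfl⟩
    have hle := le_csSup hbdd hmem
    have hmin0 : 0 ≤ min ‖x + y‖ ‖x - y‖ := le_min (norm_nonneg _) (norm_nonneg _)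
    have hs := le_sqrt_mul hmin0 (min_le_left _ _) (min_le_right _ _)
    have hTm : Tconst X < min ‖x + y‖ ‖x - y‖ := lt_min (by linarith) (by linarith)
    have hTS : Tconst X = sSup S := rfl
    rw [← hTS] at hle
    linarith

lemma nearSquare_of_tconst (hu : ∃ x : X, ‖x‖ = 1) (h : Tconst X = 2) : NearSquare X := by
  intro ε hε
  set S := {r : ℝ | ∃ x y : X, ‖x‖ = 1 ∧ ‖y‖ = 1 ∧ r = Real.sqrt (‖x + y‖ * ‖x - y‖)} with hS
  obtain ⟨u, hu1⟩ := hu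
  have hne : S.Nonempty := ⟨_, u, u, hu1, hu1, rfl⟩
  set e : ℝ := min (ε / 2) 1 with he
  have he0 : 0 < e := lt_min (by linarith) one_pos
  have he1 : e ≤ 1 := min_le_right _ _
  have heε : e ≤ ε / 2 := min_le_left _ _
  have hlt : 2 - e < sSup S := by
    have : Tconst X = sSup S := rfl
    rw [this] at h; rw [h]; linarith
  obtain ⟨r, ⟨x, y, hx, hy, rfl⟩, hr⟩ := exists_lt_of_lt_csSup hne hlt
  have ha : ‖x + y‖ ≤ 2 := norm_add_le_two hx hy
  have hb : ‖x - y‖ ≤ 2 := norm_sub_le_two hx hy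
  have ha0 : 0 ≤ ‖x + y‖ := norm_nonneg _
  have hb0 : 0 ≤ ‖x - y‖ := norm_nonneg _
  have hab : (2 - e) ^ 2 < ‖x + y‖ * ‖x - y‖ := by
    have h1 : (2 - e) ^ 2 < Real.sqrt (‖x + y‖ * ‖x - y‖) ^ 2 := by
      apply pow_lt_pow_left₀ hr (by linarith) (by norm_num)
    rwa [Real.sq_sqrt (by positivity)] at h1
  refine ⟨x, y, hx, hy, ?_, ?_⟩ <;> nlinarith

-- T2 constant
lemma t2_eq_of_nearSquare {κ τ : ℝ} (hκ : 0 < κ) (hτ : 0 < τ)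
    (hu : ∃ x : X, ‖x‖ = 1) (h : NearSquare X) : T2 X κ τ = κ + τ := by
  set S := {r : ℝ | ∃ x y : X, ‖x‖ = 1 ∧ ‖y‖ = 1 ∧
    r = Real.sqrt (‖κ • x + τ • y‖ * ‖τ • x - κ • y‖)} with hS
  obtain ⟨u, hu1⟩ := hu
  have hne : S.Nonempty := ⟨_, u, u, hu1, hu1, rfl⟩
  have hbound : ∀ x y : X, ‖x‖ = 1 → ‖y‖ = 1 →
      ‖κ • x + τ • y‖ ≤ κ + τ ∧ ‖τ • x - κ • y‖ ≤ κ + τ := by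
    intro x y hx hy
    constructor
    · calc ‖κ • x + τ • y‖ ≤ ‖κ • x‖ + ‖τ • y‖ := norm_add_le _ _
      _ = κ + τ := by rw [nsm, nsm, hx, hy, abs_of_pos hκ, abs_of_pos hτ]; ring
    · calc ‖τ • x - κ • y‖ ≤ ‖τ • x‖ + ‖κ • y‖ := norm_sub_le _ _
      _ = κ + τ := by rw [nsm, nsm, hx, hy, abs_of_pos hκ, abs_of_pos hτ]; ring
  have hbdd : BddAbove S := by
    refine ⟨κ + τ, ?_⟩
    rintro r ⟨x, y, hx, hy, rfl⟩
    obtain ⟨h1, h2⟩ := hbound x y hx hy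
    exact sqrt_mul_le (by linarith) (norm_nonneg _) (norm_nonneg _) h1 h2
  apply le_antisymm
  · apply csSup_le hne
    rintro r ⟨x, y, hx, hy, rfl⟩
    obtain ⟨h1, h2⟩ := hbound x y hx hy
    exact sqrt_mul_le (by linarith) (norm_nonneg _) (norm_nonneg _) h1 h2
  · by_contra hlt
    push_neg at hlt
    have hT0 : 0 ≤ T2 X κ τ := by
      have hmem : Real.sqrt (‖κ • u + τ • u‖ * ‖τ • u - κ • u‖) ∈ S := ⟨u, u, hu1, hu1, rfl⟩
      exact le_trans (Real.sqrt_nonneg _) (le_csSup hbdd hmem)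
    set M := max κ τ with hM
    have hM0 : 0 < M := lt_max_of_lt_left hκ
    have hmm : M + min κ τ = κ + τ := max_add_min κ τ
    have habs : |κ - τ| = M - min κ τ := by
      rw [abs_sub_comm]; exact (max_sub_min_eq_abs κ τ).symm
    have hm0 : 0 < min κ τ := lt_min hκ hτ
    set ε : ℝ := min ((κ + τ - T2 X κ τ) / (2 * M)) ((κ + τ) / (2 * M)) with hε
    have hε0 : 0 < ε := lt_min (div_pos (by linarith) (by positivity)) (by positivity)
    have hε1 : M * ε ≤ (κ + τ - T2 X κ τ) / 2 := by
      have := min_le_left ((κ + τ - T2 X κ τ) / (2 * M)) ((κ + τ) / (2 * M))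
      calc M * ε ≤ M * ((κ + τ - T2 X κ τ) / (2 * M)) := by
            apply mul_le_mul_of_nonneg_left this hM0.le
      _ = (κ + τ - T2 X κ τ) / 2 := by field_simp
    have hε2 : M * ε ≤ (κ + τ) / 2 := by
      have := min_le_right ((κ + τ - T2 X κ τ) / (2 * M)) ((κ + τ) / (2 * M))
      calc M * ε ≤ M * ((κ + τ) / (2 * M)) := by
            apply mul_le_mul_of_nonneg_left this hM0.le
      _ = (κ + τ) / 2 := by field_simp
    obtain ⟨x, y, hx, hy, h1, h2⟩ := h ε hε0
    obtain ⟨hl1, hl2⟩ := skew_lower hκ hτ hx hy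
    have ha : κ + τ - M * ε ≤ ‖κ • x + τ • y‖ := by
      have : M * (2 - ε) - |κ - τ| ≤ M * ‖x + y‖ - |κ - τ| := by nlinarith
      calc κ + τ - M * ε = M * (2 - ε) - |κ - τ| := by rw [habs]; linarith
      _ ≤ M * ‖x + y‖ - |κ - τ| := this
      _ ≤ _ := hl1
    have hb : κ + τ - M * ε ≤ ‖τ • x - κ • y‖ := by
      have : M * (2 - ε) - |κ - τ| ≤ M * ‖x - y‖ - |κ - τ| := by nlinarith
      calc κ + τ - M * ε = M * (2 - ε) - |κ - τ| := by rw [habs]; linarith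
      _ ≤ M * ‖x - y‖ - |κ - τ| := this
      _ ≤ _ := hl2
    have hmem : Real.sqrt (‖κ • x + τ • y‖ * ‖τ • x - κ • y‖) ∈ S := ⟨x, y, hx, hy, rfl⟩
    have hle := le_csSup hbdd hmem
    have hgt : T2 X κ τ < Real.sqrt (‖κ • x + τ • y‖ * ‖τ • x - κ • y‖) := by
      have := le_sqrt_mul (c := κ + τ - M * ε) (by linarith) ha hb
      linarith
    exact absurd hle (not_le.mpr hgt)

lemma nearSquare_of_t2 {κ τ : ℝ} (hκ : 0 < κ) (hτ : 0 < τ)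
    (hu : ∃ x : X, ‖x‖ = 1) (h : T2 X κ τ = κ + τ) : NearSquare X := by
  intro ε hε
  set S := {r : ℝ | ∃ x y : X, ‖x‖ = 1 ∧ ‖y‖ = 1 ∧
    r = Real.sqrt (‖κ • x + τ • y‖ * ‖τ • x - κ • y‖)} with hS
  obtain ⟨u, hu1⟩ := hu
  have hne : S.Nonempty := ⟨_, u, u, hu1, hu1, rfl⟩
  set m := min κ τ with hm
  have hm0 : 0 < m := lt_min hκ hτ
  set M := max κ τ with hM
  have hmm : M + m = κ + τ := max_add_min κ τ
  have habs : |κ - τ| = M - m := by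
    rw [abs_sub_comm]; exact (max_sub_min_eq_abs κ τ).symm
  set e : ℝ := min (m * ε / 4) ((κ + τ) / 2) with he
  have he0 : 0 < e := lt_min (by positivity) (by positivity)
  have he1 : e ≤ m * ε / 4 := min_le_left _ _
  have he2 : e ≤ (κ + τ) / 2 := min_le_right _ _
  have hlt : κ + τ - e < sSup S := by
    have : T2 X κ τ = sSup S := rfl
    rw [this] at h; rw [h]; linarith
  obtain ⟨r, ⟨x, y, hx, hy, rfl⟩, hr⟩ := exists_lt_of_lt_csSup hne hlt
  have hbound : ‖κ • x + τ • y‖ ≤ κ + τ ∧ ‖τ • x - κ • y‖ ≤ κ + τ := by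
    constructor
    · calc ‖κ • x + τ • y‖ ≤ ‖κ • x‖ + ‖τ • y‖ := norm_add_le _ _
      _ = κ + τ := by rw [nsm, nsm, hx, hy, abs_of_pos hκ, abs_of_pos hτ]; ring
    · calc ‖τ • x - κ • y‖ ≤ ‖τ • x‖ + ‖κ • y‖ := norm_sub_le _ _
      _ = κ + τ := by rw [nsm, nsm, hx, hy, abs_of_pos hκ, abs_of_pos hτ]; ring
  obtain ⟨hba, hbb⟩ := hbound
  have ha0 : 0 ≤ ‖κ • x + τ • y‖ := norm_nonneg _
  have hb0 : 0 ≤ ‖τ • x - κ • y‖ := norm_nonneg _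
  have hab : (κ + τ - e) ^ 2 < ‖κ • x + τ • y‖ * ‖τ • x - κ • y‖ := by
    have h1 : (κ + τ - e) ^ 2 < Real.sqrt (‖κ • x + τ • y‖ * ‖τ • x - κ • y‖) ^ 2 :=
      pow_lt_pow_left₀ hr (by linarith) (by norm_num)
    rwa [Real.sq_sqrt (by positivity)] at h1
  have hga : κ + τ - 2 * e < ‖κ • x + τ • y‖ := by nlinarith
  have hgb : κ + τ - 2 * e < ‖τ • x - κ • y‖ := by nlinarith
  obtain ⟨hu1', hu2'⟩ := skew_upper hκ hτ hx hy
  rw [habs] at hu1' hu2'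
  have hxy : 2 - ε < ‖x + y‖ := by
    have : m * (2 - ε) < m * ‖x + y‖ := by nlinarith
    exact lt_of_mul_lt_mul_left this hm0.le
  have hxy2 : 2 - ε < ‖x - y‖ := by
    have : m * (2 - ε) < m * ‖x - y‖ := by nlinarith
    exact lt_of_mul_lt_mul_left this hm0.le
  exact ⟨x, y, hx, hy, hxy, hxy2⟩



end Helpers

/-- For a real Banach space `X` with `dim X ≥ 2` and `κ, τ > 0`, the
following are equivalent: (i) `X` is not uniformly non-square; (ii) `J(X) = 2`;
(iii) `T(X) = 2`; (iv) `T₂(κ,τ,X) = κ + τ`. -/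
theorem stmt15 {X : Type*} [NormedAddCommGroup X] [NormedSpace ℝ X] [CompleteSpace X]
    (hdim : 2 ≤ Module.rank ℝ X) (κ τ : ℝ) (hκ : 0 < κ) (hτ : 0 < τ) :
    (¬ UniformlyNonSquare X ↔ JamesConst X = 2) ∧
    (¬ UniformlyNonSquare X ↔ Tconst X = 2) ∧
    (¬ UniformlyNonSquare X ↔ T2 X κ τ = κ + τ) := by
  
  obtain ⟨u, hu⟩ := exists_unit_vec hdim
  refine ⟨⟨fun h => james_eq_two_of_nearSquare ⟨u, hu⟩ (nearSquare_of_not_uns h),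
      fun h => not_uns_of_nearSquare (nearSquare_of_james ⟨u, hu⟩ h)⟩,
    ⟨fun h => tconst_eq_two_of_nearSquare ⟨u, hu⟩ (nearSquare_of_not_uns h),
      fun h => not_uns_of_nearSquare (nearSquare_of_tconst ⟨u, hu⟩ h)⟩,
    ⟨fun h => t2_eq_of_nearSquare hκ hτ ⟨u, hu⟩ (nearSquare_of_not_uns h),
      fun h => not_uns_of_nearSquare (nearSquare_of_t2 hκ hτ ⟨u, hu⟩ h)⟩⟩
end
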